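/- Let K be a contraction on a Hilbert space H (‖K‖ ≤ 1). Define the Schaeffer-type operator S on H ⊕ H ⊕ H ⊕ ⋯ (the countable Hilbert space direct sum of copies of H) by S(x₀, x₁, x₂, …) = (K x₀, D x₀, x₁, x₂, …), where D = (1 - K* K)^{1/2}. Then S is an isometry, and the compression of S to the first coordinate equals K; moreover the first copy of H is coinvariant in the sense that S*(x, 0, 0, …) = (K* x, 0, 0, …). -/

import Mathlib

/-! Since `K*K + D*D = 1`, the map `x₀ ↦ (K x₀, D x₀)` is an isometry `H → H ⊕ H`; `S` is this map
on the first coordinate followed by a shift of the remaining ones, so it preserves inner products.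
The coinvariance is the adjoint form of `(S x)₀ = K x₀`. -/

open scoped InnerProductSpace

section

variable {𝕜 E F F' : Type*} [RCLike 𝕜] [NormedAddCommGroup E] [InnerProductSpace 𝕜 E]
  [CompleteSpace E] [NormedAddCommGroup F] [InnerProductSpace 𝕜 F] [CompleteSpace F]
  [NormedAddCommGroup F'] [InnerProductSpace 𝕜 F'] [CompleteSpace F']

theorem ContinuousLinearMap.inner_map_add_inner_map_eq_inner {K : E →L[𝕜] F} {D : E →L[𝕜] F'}
    (hKD : K.adjoint ∘L K + D.adjoint ∘L D = 1) (x y : E) :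
    ⟪K x, K y⟫_𝕜 + ⟪D x, D y⟫_𝕜 = ⟪x, y⟫_𝕜 := by
  rw [← adjoint_inner_right K, ← adjoint_inner_right D, ← inner_add_right]
  simpa using congr_arg (⟪x, · y⟫_𝕜) hKD

end

namespace lp

variable {𝕜 : Type*} [RCLike 𝕜]

theorem inner_eq_inner_zero_add_inner_one_add_tsum {G : ℕ → Type*}
    [∀ n, NormedAddCommGroup (G n)] [∀ n, InnerProductSpace 𝕜 (G n)] (f g : lp G 2) :
    ⟪f, g⟫_𝕜 = ⟪f 0, g 0⟫_𝕜 + ⟪f 1, g 1⟫_𝕜 + ∑' n, ⟪f (n + 2), g (n + 2)⟫_𝕜 := by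
  have h := (summable_inner (𝕜 := 𝕜) f g).sum_add_tsum_nat_add 2
  rw [Finset.sum_range_succ, Finset.sum_range_one] at h
  rw [inner_eq_tsum, ← h]

theorem adjoint_single_of_apply_eq {ι : Type*} [DecidableEq ι] {G G' : ι → Type*}
    [∀ i, NormedAddCommGroup (G i)] [∀ i, InnerProductSpace 𝕜 (G i)] [∀ i, CompleteSpace (G i)]
    [∀ i, NormedAddCommGroup (G' i)] [∀ i, InnerProductSpace 𝕜 (G' i)]
    [∀ i, CompleteSpace (G' i)] {S : lp G 2 →L[𝕜] lp G' 2} {i j : ι} {K : G j →L[𝕜] G' i}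
    (hS : ∀ x, S x i = K (x j)) (v : G' i) :
    S.adjoint (lp.single 2 i v) = lp.single 2 j (K.adjoint v) := by
  refine ext_inner_right 𝕜 fun y => ?_
  rw [ContinuousLinearMap.adjoint_inner_left, inner_single_left, inner_single_left, hS,
    ContinuousLinearMap.adjoint_inner_left]

variable {E : Type*} [NormedAddCommGroup E] [InnerProductSpace 𝕜 E] [CompleteSpace E]

theorem inner_map_map_of_apply_zero_of_apply_one_of_apply_add_two
    {K D : E →L[𝕜] E} (hKD : K.adjoint ∘L K + D.adjoint ∘L D = 1)
    {S : lp (fun _ : ℕ => E) 2 →L[𝕜] lp (fun _ : ℕ => E) 2}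
    (hS0 : ∀ x, S x 0 = K (x 0)) (hS1 : ∀ x, S x 1 = D (x 0))
    (hS2 : ∀ x k, S x (k + 2) = x (k + 1)) (x y : lp (fun _ : ℕ => E) 2) :
    ⟪S x, S y⟫_𝕜 = ⟪x, y⟫_𝕜 := by
  have h := (summable_inner (𝕜 := 𝕜) x y).tsum_eq_zero_add
  rw [inner_eq_inner_zero_add_inner_one_add_tsum, hS0, hS0, hS1, hS1,
    K.inner_map_add_inner_map_eq_inner hKD, inner_eq_tsum, h]
  simp only [hS2]

end lp

theorem stmt_3_general {H : Type*} [NormedAddCommGroup H] [InnerProductSpace ℂ H] [CompleteSpace H]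
    (K D : H →L[ℂ] H)
    (hDsa : D.adjoint = D) (hD : D.comp D = 1 - K.adjoint.comp K)
    (S : lp (fun _ : ℕ => H) 2 →L[ℂ] lp (fun _ : ℕ => H) 2)
    (hS0 : ∀ x : lp (fun _ : ℕ => H) 2, (S x) 0 = K (x 0))
    (hS1 : ∀ x : lp (fun _ : ℕ => H) 2, (S x) 1 = D (x 0))
    (hS2 : ∀ (x : lp (fun _ : ℕ => H) 2) (k : ℕ), (S x) (k + 2) = x (k + 1)) :
    (∀ x, ‖S x‖ = ‖x‖) ∧
      (∀ v : H, (S (lp.single 2 0 v)) 0 = K v) ∧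
      ∀ v : H, S.adjoint (lp.single 2 0 v) = lp.single 2 0 (K.adjoint v) := by
  have hKD : K.adjoint ∘L K + D.adjoint ∘L D = 1 := by
    rw [hDsa, hD, add_sub_cancel]
  refine ⟨?_, fun v => by simp [hS0], lp.adjoint_single_of_apply_eq hS0⟩
  exact (LinearMap.norm_map_iff_inner_map_map S).2
    (lp.inner_map_map_of_apply_zero_of_apply_one_of_apply_add_two hKD hS0 hS1 hS2)

/-- Schaeffer-type dilation.  Let `K` be a contraction on `H`, `D = (1 - K*K)^{1/2}`,
and let `S` act on the ℓ²-direct sum `⊕_{n ≥ 0} H` by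
`S(x₀, x₁, x₂, …) = (K x₀, D x₀, x₁, x₂, …)`.  Then `S` is an isometry, its
compression to the first coordinate is `K`, and the first copy of `H` is
coinvariant: `S*(x, 0, 0, …) = (K* x, 0, 0, …)`. -/
theorem stmt_3 {H : Type*} [NormedAddCommGroup H] [InnerProductSpace ℂ H] [CompleteSpace H]
    (K D : H →L[ℂ] H) (hK : ‖K‖ ≤ 1)
    (hDsa : D.adjoint = D) (hD : D.comp D = 1 - K.adjoint.comp K)
    (S : lp (fun _ : ℕ => H) 2 →L[ℂ] lp (fun _ : ℕ => H) 2)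
    (hS0 : ∀ x : lp (fun _ : ℕ => H) 2, (S x) 0 = K (x 0))
    (hS1 : ∀ x : lp (fun _ : ℕ => H) 2, (S x) 1 = D (x 0))
    (hS2 : ∀ (x : lp (fun _ : ℕ => H) 2) (k : ℕ), (S x) (k + 2) = x (k + 1)) :
    (∀ x, ‖S x‖ = ‖x‖) ∧
      (∀ v : H, (S (lp.single 2 0 v)) 0 = K v) ∧
      ∀ v : H, S.adjoint (lp.single 2 0 v) = lp.single 2 0 (K.adjoint v) :=
  stmt_3_general K D hDsa hD S hS0 hS1 hS2
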